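/- arXiv:1612.04805 — 2 statements merged into one kernel-verified Lean document; each statement's English description precedes it below -/
import Mathlib

section
/- Let f : ℝ/2ℤ × [-1,1] → ℝ be continuous, invariant under the map (y,t) ↦ (y+1, -t), and suppose that for some odd n and all small ε > 0, sgn f(y + 1/(2n), -(1-ε)) = sgn f(y + 1/(2n), 1-ε) ≠ 0 and f(·, 1-ε) changes sign exactly when y increases by 1/n. Then a contradiction arises: the sign at (y + 1/(2n), 1-ε) equals minus itself. -/
/-- Let `f : ℝ × [-1,1] → ℝ` be continuous, `2`-periodic in the
first variable (modelling `ℝ/2ℤ × [-1,1]`) and invariant under the antipodal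
deck transformation `(y,t) ↦ (y+1,-t)`.  Suppose for some odd `n` and all small
`ε > 0` the signs of `f` at `(y + 1/(2n), ±(1-ε))` agree and are nonzero, and
`f(·, 1-ε)` changes sign exactly when the first coordinate increases by `1/n`.
Then a contradiction arises. -/
theorem stmt_9 (f : ℝ × ℝ → ℝ) (hf : Continuous f)
    (hper : ∀ y t : ℝ, f (y + 2, t) = f (y, t))
    (hinv : ∀ y t : ℝ, f (y + 1, -t) = f (y, t))
    (n : ℕ) (hodd : Odd n) (hn : 0 < n) (y : ℝ)
    (hsign : ∀ ε : ℝ, 0 < ε → ε < 1 →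
      (Real.sign (f (y + 1 / (2 * n), -(1 - ε)))
          = Real.sign (f (y + 1 / (2 * n), 1 - ε)) ∧
        Real.sign (f (y + 1 / (2 * n), 1 - ε)) ≠ 0 ∧
        ∀ y' : ℝ, Real.sign (f (y' + 1 / n, 1 - ε))
          = -Real.sign (f (y', 1 - ε)))) :
    False := by
  obtain ⟨h1, h2, h3⟩ := hsign (1/2) (by norm_num) (by norm_num)
  have hc : (1 : ℝ) - 1/2 = 1/2 := by norm_num
  rw [hc] at h1 h2 h3
  set g : ℝ → ℝ := fun y' => Real.sign (f (y', 1/2)) with hg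
  have hnR : (n : ℝ) ≠ 0 := Nat.cast_ne_zero.mpr hn.ne'
  -- iterate the shift
  have key : ∀ k : ℕ, ∀ y' : ℝ, g (y' + k * (1/n)) = (-1)^k * g y' := by
    intro k
    induction k with
    | zero => intro y'; simp
    | succ k ih =>
      intro y'
      have : y' + (k+1 : ℕ) * (1/(n:ℝ)) = (y' + 1/n) + k * (1/n) := by
        push_cast; ring
      rw [this, ih]; simp only [hg]; rw [h3 y']
      ring
  have hshift : ∀ y' : ℝ, g (y' + 1) = - g y' := by
    intro y'
    have := key n y'
    rw [mul_one_div, div_self hnR, Odd.neg_one_pow hodd] at this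
    simpa using this
  -- via the deck transformation
  have hA : g (y + 1/(2*n)) = g (y + 1/(2*n) - 1) := by
    have := hinv (y + 1/(2*n) - 1) (1/2)
    rw [sub_add_cancel] at this
    rw [hg]
    simp only
    rw [← h1, ← this]
  have hB : g ((y + 1/(2*n) - 1) + 1) = - g (y + 1/(2*n) - 1) :=
    hshift _
  rw [sub_add_cancel, ← hA] at hB
  have : g (y + 1/(2*n)) = 0 := by linarith
  exact h2 this
end

section
/- Let Σ be a closed surface and suppose that for every point x ∈ Σ there is a one-dimensional space of eigenfunctions vanishing to order exactly n at x, defining a continuous section of the bundle of 2n-stars E_Σ(2n). If the Euler number of E_Σ(2n) (or of its pullback to the orientation double cover) is nonzero, then no such continuous section exists, contradiction. In particular, for Σ = RP² the pullback to S² has Euler number 4n ≠ 0, so such a family of eigenfunctions cannot exist. -/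
/-!
The two trivializations of the section differ by the nonvanishing map `w = v / u` on the closed
disc, which equals `z ^ (4 * n)` on the boundary circle. The disc is simply connected, so `w` has a
continuous logarithm `L`. Along the boundary loop `t ↦ exp (t * I)`, `L` is then a continuous log
of `t ↦ exp (4 * n * t * I)`, and uniqueness of lifts through the covering `exp` forces it to be
`L 1 + 4 * n * t * I`; closing the loop at `t = 2 * π` gives `4 * n = 0`.
-/

open Complex Real

theorem SimplyConnectedSpace.exists_continuous_log {A : Type*} [TopologicalSpace A]
    [SimplyConnectedSpace A] [LocallyPathConnectedSpace A] {f : A → ℂ} (hf : Continuous f)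
    (hf0 : ∀ a, f a ≠ 0) : ∃ L : A → ℂ, Continuous L ∧ ∀ a, exp (L a) = f a := by
  obtain ⟨a₀⟩ := (inferInstance : Nonempty A)
  obtain ⟨L, ⟨-, hL⟩, -⟩ := isCoveringMapOn_exp.existsUnique_continuousMap_lifts ⟨f, hf⟩
    (exp_log (hf0 a₀)) hf0
  exact ⟨L, L.continuous, congrFun hL⟩

theorem eq_of_exp_comp_eq {A : Type*} [TopologicalSpace A] [PreconnectedSpace A]
    {g₁ g₂ : A → ℂ} (h₁ : Continuous g₁) (h₂ : Continuous g₂)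
    (he : ∀ a, exp (g₁ a) = exp (g₂ a)) (a : A) (ha : g₁ a = g₂ a) : g₁ = g₂ :=
  isCoveringMap_exp.eq_of_comp_eq h₁ h₂ (funext fun a ↦ Subtype.ext (he a)) a ha

theorem eq_const_add_of_exp_eq_exp_mul_I_pow {ℓ : ℝ → ℂ} (hℓ : Continuous ℓ) (m : ℕ)
    (he : ∀ t : ℝ, exp (ℓ t) = exp (t * I) ^ m) : ℓ = fun t : ℝ ↦ ℓ 0 + m * t * I := by
  refine eq_of_exp_comp_eq hℓ (by fun_prop) (fun t ↦ ?_) 0 (by simp)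
  have h0 : exp (ℓ 0) = 1 := by simpa using he 0
  rw [he, Complex.exp_add, h0, one_mul, ← Complex.exp_nat_mul, mul_assoc]

lemma convex_unitDisc : Convex ℝ {z : ℂ | ‖z‖ ≤ 1} := by
  simpa [Metric.closedBall, dist_zero_right] using convex_closedBall (0 : ℂ) 1

instance : SimplyConnectedSpace {z : ℂ // ‖z‖ ≤ 1} :=
  have : ContractibleSpace {z : ℂ | ‖z‖ ≤ 1} := convex_unitDisc.contractibleSpace ⟨0, by simp⟩
  SimplyConnectedSpace.ofContractible {z : ℂ | ‖z‖ ≤ 1}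

instance : LocallyPathConnectedSpace {z : ℂ // ‖z‖ ≤ 1} :=
  convex_unitDisc.locallyPathConnectedSpace

theorem eq_zero_of_continuous_extension_pow {m : ℕ} {w : {z : ℂ // ‖z‖ ≤ 1} → ℂ}
    (hw : Continuous w) (hw0 : ∀ z, w z ≠ 0)
    (hb : ∀ z : {z : ℂ // ‖z‖ ≤ 1}, ‖(z : ℂ)‖ = 1 → w z = (z : ℂ) ^ m) : m = 0 := by
  obtain ⟨L, hL, hLw⟩ := SimplyConnectedSpace.exists_continuous_log hw hw0
  let γ : ℝ → {z : ℂ // ‖z‖ ≤ 1} := fun t ↦ ⟨exp (t * I), (norm_exp_ofReal_mul_I t).le⟩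
  have hγ : Continuous γ := by fun_prop
  have hwind := congrFun (eq_const_add_of_exp_eq_exp_mul_I_pow (hL.comp hγ) m
    fun t ↦ (hLw _).trans (hb _ (norm_exp_ofReal_mul_I t))) (2 * π)
  have hloop : γ (2 * π) = γ 0 := Subtype.ext <| by
    change exp (((2 * π : ℝ) : ℂ) * I) = exp ((0 : ℝ) * I)
    push_cast
    rw [exp_two_pi_mul_I, zero_mul, Complex.exp_zero]
  simp only [Function.comp_apply, hloop] at hwind
  simpa [pi_ne_zero] using hwind

/-- Suppose a family of eigenfunctions (one-dimensional space
of eigenfunctions vanishing to order exactly `n` at each point `x ∈ RP²`)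
defines a continuous section of the `2n`-star bundle `E_{RP²}(2n)`; pulling back
along the double cover `S² → RP²` gives a section of `E_{S²}(2n)`, a circle
bundle of Euler number `4n`.  In the clutching description (two trivial bundles
over hemisphere discs glued along the equator by `z ↦ z^(4n)`), such a section
is a pair of continuous unit-valued maps `u, v` on the closed disc with
`v z = z^(4n) · u z` on the boundary.  Since `4n ≠ 0`, no such pair exists,
hence the family of eigenfunctions cannot exist. -/
theorem stmt_13 (n : ℕ) (hn : 0 < n) (eigenfamilyExists : Prop)
    (hsec : eigenfamilyExists →
      ∃ u v : {z : ℂ // ‖z‖ ≤ 1} → ℂ,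
        Continuous u ∧ Continuous v ∧
        (∀ z, ‖u z‖ = 1 ∧ ‖v z‖ = 1) ∧
        (∀ z : {z : ℂ // ‖z‖ ≤ 1}, ‖(z : ℂ)‖ = 1 →
          v z = (z : ℂ) ^ (4 * n) * u z)) :
    ¬ eigenfamilyExists := by
  intro hfamily
  obtain ⟨u, v, hu, hv, hnorm, hglue⟩ := hsec hfamily
  have hu0 : ∀ z, u z ≠ 0 := fun z ↦ norm_ne_zero_iff.mp (by simp [(hnorm z).1])
  have hv0 : ∀ z, v z ≠ 0 := fun z ↦ norm_ne_zero_iff.mp (by simp [(hnorm z).2])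
  have h4n : 4 * n = 0 :=
    eq_zero_of_continuous_extension_pow (w := fun z ↦ v z / u z) (hv.div hu hu0)
      (fun z ↦ div_ne_zero (hv0 z) (hu0 z))
      (fun z hz ↦ by rw [hglue z hz, mul_div_cancel_right₀ _ (hu0 z)])
  omega
end
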